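/- arXiv:2603.24457 — 3 statements merged into one kernel-verified Lean document; each statement's English description precedes it below -/
import Mathlib

section
/- Let u(x,t) := ½|x|² − t + δ R^{2−β} on the region R := (|x|² − t)^{1/2} > 2 of ℝⁿ × (−∞,0], where β ∈ (0,2), β ≠ 1, and δ > 0. Then −u_t · det(D²ₓu) = 1 + δ(2−β)(n + ½) R^{−β} + δ(β−2)β R^{−β−2}|x|² + O(R^{−2β}) as R → ∞; in particular −u_t det D²ₓu = 1 + O(R^{−β}) while u − (½|x|² − t) = δ R^{2−β} is exactly of order R^{2−β}. -/
/-!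
Write `ρ = |x|² − t = R²` and `γ = (2 − β)/2`. In space, `u` is a function `g(|x|²)` of the
squared norm, so `D²ₓu = 2g'·I + 4g''·x xᵀ`, and the matrix determinant lemma gives
`det D²ₓu = a^n (1 + η/a)` with `a = 2g' = 1 + 2ε`, `ε = δγρ^(γ−1) = δγR^(−β)` and
`η = 4g''|x|² = δ(β−2)βR^(−β−2)|x|²`; also `−u_t = 1 + ε`. Both `ε` and `|η|` are at most
`m = δR^(−β)` (using `4γ(1−γ) ≤ 1` and `|x|² ≤ R²`), and expanding
`(1 + ε)(1 + 2ε)^n (1 + η/(1 + 2ε))` to first order in `ε, η` leaves an error `O(m²)`,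
which is `O(R^(−2β))`.
-/

open Real Filter Topology Matrix

theorem abs_perturbed_product_sub_linear_le (n : ℕ) {ε η m : ℝ} (hε : 0 ≤ ε) (hεm : ε ≤ m)
    (hm : m ≤ 1 / 2) (hη : |η| ≤ m) :
    |(1 + ε) * (1 + 2 * ε) ^ n * (1 + η / (1 + 2 * ε)) - (1 + (2 * n + 1) * ε + η)| ≤
      2 * 4 ^ n * (n + 1) * m ^ 2 := by
  have ha : 1 ≤ 1 + 2 * ε := by linarith
  have hm₀ : 0 ≤ m := hε.trans hεm
  induction n with
  | zero =>
    have hbase : (1 + ε) * (1 + 2 * ε) ^ 0 * (1 + η / (1 + 2 * ε)) -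
        (1 + (2 * (0 : ℕ) + 1) * ε + η) = -(ε * η / (1 + 2 * ε)) := by
      field_simp
      push_cast
      ring
    rw [hbase, abs_neg, abs_div, abs_mul, abs_of_nonneg hε, abs_of_pos (by linarith : 0 < 1 + 2 * ε)]
    calc ε * |η| / (1 + 2 * ε) ≤ ε * |η| := div_le_self (by positivity) ha
      _ ≤ m * m := mul_le_mul hεm hη (abs_nonneg _) hm₀
      _ ≤ 2 * 4 ^ 0 * ((0 : ℕ) + 1) * m ^ 2 := by push_cast; nlinarith [sq_nonneg m]
  | succ k ih =>
    have hstep : (1 + ε) * (1 + 2 * ε) ^ (k + 1) * (1 + η / (1 + 2 * ε)) -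
        (1 + (2 * ((k + 1 : ℕ) : ℝ) + 1) * ε + η) =
        (1 + 2 * ε) * ((1 + ε) * (1 + 2 * ε) ^ k * (1 + η / (1 + 2 * ε)) -
          (1 + (2 * k + 1) * ε + η)) + 2 * ε * ((2 * k + 1) * ε + η) := by
      push_cast
      ring
    have hlin : |2 * ε * ((2 * k + 1) * ε + η)| ≤ 4 * (k + 1) * m ^ 2 := by
      have hsum : |(2 * k + 1) * ε + η| ≤ (2 * k + 1) * m + m :=
        (abs_add_le _ _).trans
          (by rw [abs_mul, abs_of_nonneg (by positivity), abs_of_nonneg hε]; gcongr)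
      calc |2 * ε * ((2 * k + 1) * ε + η)| = 2 * ε * |(2 * k + 1) * ε + η| := by
            rw [abs_mul, abs_of_nonneg (by positivity)]
        _ ≤ 2 * m * ((2 * k + 1) * m + m) := by gcongr
        _ = 4 * (k + 1) * m ^ 2 := by ring
    have h4 : (1 : ℝ) ≤ 4 ^ k := one_le_pow₀ (by norm_num)
    rw [hstep]
    calc _ ≤ |1 + 2 * ε| * |(1 + ε) * (1 + 2 * ε) ^ k * (1 + η / (1 + 2 * ε)) -
          (1 + (2 * k + 1) * ε + η)| + |2 * ε * ((2 * k + 1) * ε + η)| := by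
          rw [← abs_mul]; exact abs_add_le _ _
      _ ≤ 2 * (2 * 4 ^ k * (k + 1) * m ^ 2) + 4 * (k + 1) * m ^ 2 := by
          gcongr
          rw [abs_le]; constructor <;> linarith
      _ ≤ 2 * 4 ^ (k + 1) * ((k + 1 : ℕ) + 1) * m ^ 2 := by
          push_cast
          rw [pow_succ (4 : ℝ) k]
          nlinarith [mul_nonneg (Nat.cast_nonneg (α := ℝ) k) (sq_nonneg m),
            mul_nonneg (sub_nonneg.mpr h4) (mul_nonneg (Nat.cast_nonneg (α := ℝ) k) (sq_nonneg m)),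
            mul_nonneg (sub_nonneg.mpr h4) (sq_nonneg m)]

section Hessian

variable {ι : Type*} [Fintype ι]

theorem EuclideanSpace.dotProduct_self_eq_norm_sq (x : EuclideanSpace ℝ ι) :
    (x : ι → ℝ) ⬝ᵥ x = ‖x‖ ^ 2 := by
  rw [EuclideanSpace.real_norm_sq_eq]
  simp [dotProduct, sq]

variable [DecidableEq ι]

theorem det_smul_one_add_vecMulVec {K : Type*} [Field K] {a : K} (ha : a ≠ 0) (u v : ι → K) :
    det (a • (1 : Matrix ι ι K) + vecMulVec u v) = a ^ Fintype.card ι * (1 + v ⬝ᵥ u / a) := by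
  have hfactor : a • (1 : Matrix ι ι K) + vecMulVec u v = a • (1 + vecMulVec (a⁻¹ • u) v) := by
    rw [smul_add, smul_vecMulVec, smul_smul, mul_inv_cancel₀ ha, one_smul]
  rw [hfactor, det_smul, vecMulVec_eq Unit, det_one_add_replicateCol_mul_replicateRow,
    dotProduct_smul, smul_eq_mul, inv_mul_eq_div]

theorem hessian_comp_norm_sq_eq {g g' : ℝ → ℝ} {g'' : ℝ} {x : EuclideanSpace ℝ ι}
    (hg : ∀ᶠ q in 𝓝 (‖x‖ ^ 2), HasDerivAt g (g' q) q) (hg' : HasDerivAt g' g'' (‖x‖ ^ 2)) :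
    (Matrix.of fun i j => fderiv ℝ (fun y => fderiv ℝ (fun z => g (‖z‖ ^ 2)) y
        (EuclideanSpace.single j 1)) x (EuclideanSpace.single i 1)) =
      (2 * g' (‖x‖ ^ 2)) • (1 : Matrix ι ι ℝ) + (4 * g'') • vecMulVec x x := by
  ext i j
  have hnorm : Continuous fun y : EuclideanSpace ℝ ι => ‖y‖ ^ 2 := by fun_prop
  have hgrad : (fun y => fderiv ℝ (fun z => g (‖z‖ ^ 2)) y (EuclideanSpace.single j 1)) =ᶠ[𝓝 x]
      fun y => 2 * g' (‖y‖ ^ 2) * y j := by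
    filter_upwards [(hnorm.tendsto x).eventually hg] with y hy
    have hy' : HasFDerivAt (fun z => g (‖z‖ ^ 2)) _ y :=
      hy.comp_hasFDerivAt y (hasStrictFDerivAt_norm_sq y).hasFDerivAt
    rw [hy'.fderiv]
    simp [EuclideanSpace.inner_single_right]
    ring
  have hx : HasFDerivAt (fun y : EuclideanSpace ℝ ι => 2 * g' (‖y‖ ^ 2) * y j) _ x :=
    ((hg'.comp_hasFDerivAt x (hasStrictFDerivAt_norm_sq x).hasFDerivAt).const_mul 2).mul
      (EuclideanSpace.proj (𝕜 := ℝ) j).hasFDerivAt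
  rw [Matrix.of_apply, hgrad.fderiv_eq, hx.fderiv]
  simp [EuclideanSpace.inner_single_right, Matrix.one_apply, vecMulVec_apply, @eq_comm _ j i]
  ring

end Hessian

theorem hasDerivAt_sub_const_rpow {t q : ℝ} (hq : t < q) (p : ℝ) :
    HasDerivAt (fun q => (q - t) ^ p) (p * (q - t) ^ (p - 1)) q := by
  simpa using ((hasDerivAt_id q).sub_const t).rpow_const (p := p) (Or.inl (sub_pos.mpr hq).ne')

theorem neg_deriv_mul_det_hessian_eq {n : ℕ} {δ γ t : ℝ} (hδγ : 0 ≤ δ * γ)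
    {x : EuclideanSpace ℝ (Fin n)} (hρ : t < ‖x‖ ^ 2) :
    -deriv (fun s => ‖x‖ ^ 2 / 2 - s + δ * (‖x‖ ^ 2 - s) ^ γ) t *
        det (Matrix.of fun i j => fderiv ℝ (fun y => fderiv ℝ
          (fun z => ‖z‖ ^ 2 / 2 - t + δ * (‖z‖ ^ 2 - t) ^ γ) y (EuclideanSpace.single j 1)) x
            (EuclideanSpace.single i 1)) =
      (1 + δ * γ * (‖x‖ ^ 2 - t) ^ (γ - 1)) * (1 + 2 * (δ * γ * (‖x‖ ^ 2 - t) ^ (γ - 1))) ^ n *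
        (1 + 4 * δ * γ * (γ - 1) * (‖x‖ ^ 2 - t) ^ (γ - 2) * ‖x‖ ^ 2 /
          (1 + 2 * (δ * γ * (‖x‖ ^ 2 - t) ^ (γ - 1)))) := by
  have htime : HasDerivAt (fun s => ‖x‖ ^ 2 / 2 - s + δ * (‖x‖ ^ 2 - s) ^ γ)
      (-(1 + δ * γ * (‖x‖ ^ 2 - t) ^ (γ - 1))) t := by
    refine (((hasDerivAt_id' t).const_sub (‖x‖ ^ 2 / 2)).add
      ((((hasDerivAt_id' t).const_sub (‖x‖ ^ 2)).rpow_const (p := γ)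
        (Or.inl (sub_pos.mpr hρ).ne')).const_mul δ)).congr_deriv ?_
    ring
  have hg : ∀ᶠ q in 𝓝 (‖x‖ ^ 2), HasDerivAt (fun q => q / 2 - t + δ * (q - t) ^ γ)
      (1 / 2 + δ * γ * (q - t) ^ (γ - 1)) q := by
    filter_upwards [eventually_gt_nhds hρ] with q hq
    refine ((((hasDerivAt_id' q).div_const 2).sub_const t).add
      ((hasDerivAt_sub_const_rpow hq γ).const_mul δ)).congr_deriv ?_
    ring
  have hg' := ((hasDerivAt_sub_const_rpow hρ (γ - 1)).const_mul (δ * γ)).const_add (1 / 2)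
  have ha : 2 * (1 / 2 + δ * γ * (‖x‖ ^ 2 - t) ^ (γ - 1)) ≠ 0 := by
    have := rpow_nonneg (sub_pos.mpr hρ).le (γ - 1)
    positivity
  rw [htime.deriv, hessian_comp_norm_sq_eq hg hg', ← smul_vecMulVec,
    det_smul_one_add_vecMulVec ha, Fintype.card_fin, dotProduct_smul,
    EuclideanSpace.dotProduct_self_eq_norm_sq, show γ - 1 - 1 = γ - 2 by ring]
  field_simp
  ring

theorem abs_neg_deriv_mul_det_hessian_sub_le {n : ℕ} {δ γ t : ℝ} (hδ : 0 ≤ δ) (hγ₀ : 0 ≤ γ)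
    (hγ₁ : γ ≤ 1) {x : EuclideanSpace ℝ (Fin n)} (ht : t ≤ 0) (hρ : t < ‖x‖ ^ 2)
    (hm : δ * (‖x‖ ^ 2 - t) ^ (γ - 1) ≤ 1 / 2) :
    |-deriv (fun s => ‖x‖ ^ 2 / 2 - s + δ * (‖x‖ ^ 2 - s) ^ γ) t *
        det (Matrix.of fun i j => fderiv ℝ (fun y => fderiv ℝ
          (fun z => ‖z‖ ^ 2 / 2 - t + δ * (‖z‖ ^ 2 - t) ^ γ) y (EuclideanSpace.single j 1)) x
            (EuclideanSpace.single i 1)) -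
      (1 + (2 * n + 1) * (δ * γ * (‖x‖ ^ 2 - t) ^ (γ - 1)) +
        4 * δ * γ * (γ - 1) * (‖x‖ ^ 2 - t) ^ (γ - 2) * ‖x‖ ^ 2)| ≤
      2 * 4 ^ n * (n + 1) * (δ * (‖x‖ ^ 2 - t) ^ (γ - 1)) ^ 2 := by
  have hρ₀ : 0 < ‖x‖ ^ 2 - t := sub_pos.mpr hρ
  have hP : 0 ≤ (‖x‖ ^ 2 - t) ^ (γ - 1) := rpow_nonneg hρ₀.le _
  rw [neg_deriv_mul_det_hessian_eq (mul_nonneg hδ hγ₀) hρ]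
  refine abs_perturbed_product_sub_linear_le n (by positivity) ?_ hm ?_
  · calc δ * γ * (‖x‖ ^ 2 - t) ^ (γ - 1) = γ * (δ * (‖x‖ ^ 2 - t) ^ (γ - 1)) := by ring
      _ ≤ δ * (‖x‖ ^ 2 - t) ^ (γ - 1) := mul_le_of_le_one_left (by positivity) hγ₁
  · have hγγ : 4 * γ * (1 - γ) ≤ 1 := by nlinarith [sq_nonneg (2 * γ - 1)]
    have hγγ₀ : 0 ≤ 4 * γ * (1 - γ) := mul_nonneg (by positivity) (by linarith)
    have hx : ‖x‖ ^ 2 / (‖x‖ ^ 2 - t) ≤ 1 := (div_le_one hρ₀).mpr (by linarith)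
    have hη : 4 * δ * γ * (γ - 1) * (‖x‖ ^ 2 - t) ^ (γ - 2) * ‖x‖ ^ 2 =
        -(δ * (‖x‖ ^ 2 - t) ^ (γ - 1) * (4 * γ * (1 - γ) * (‖x‖ ^ 2 / (‖x‖ ^ 2 - t)))) := by
      rw [show γ - 2 = γ - 1 - 1 by ring, rpow_sub_one hρ₀.ne']
      field_simp
      ring
    rw [hη, abs_neg, abs_of_nonneg (by positivity)]
    exact mul_le_of_le_one_right (by positivity) (mul_le_one₀ hγγ (by positivity) hx)

theorem mul_rpow_neg_le_half {δ β R : ℝ} (hδ : 0 < δ) (hβ : 0 < β) (hR : (2 * δ) ^ β⁻¹ ≤ R) :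
    δ * R ^ (-β) ≤ 1 / 2 := by
  have hR₀ : 0 < R := (rpow_pos_of_pos (by positivity) _).trans_le hR
  have h : 2 * δ ≤ R ^ β := (rpow_inv_le_iff_of_pos (by positivity) hR₀.le hβ).mp hR
  calc δ * R ^ (-β) = δ / R ^ β := by rw [rpow_neg hR₀.le, div_eq_mul_inv]
    _ ≤ δ / (2 * δ) := by gcongr
    _ = 1 / 2 := by field_simp

theorem sharpness_example_beta_ne_one_general (n : ℕ) (β δ : ℝ)
    (hβ : 0 < β ∧ β < 2) (hδ : 0 < δ) :
    ∃ C > 0, ∃ R₀ > 2, ∀ (x : EuclideanSpace ℝ (Fin n)) (t : ℝ), t ≤ 0 →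
      R₀ ≤ Real.sqrt (‖x‖ ^ 2 - t) →
      letI u : EuclideanSpace ℝ (Fin n) → ℝ → ℝ :=
        fun y s => ‖y‖ ^ 2 / 2 - s + δ * (‖y‖ ^ 2 - s) ^ ((2 - β) / 2)
      letI R : ℝ := Real.sqrt (‖x‖ ^ 2 - t)
      |(-(deriv (fun s => u x s) t)) *
          (Matrix.det (Matrix.of fun i j : Fin n =>
            fderiv ℝ (fun y => fderiv ℝ (fun z => u z t) y (EuclideanSpace.single j 1)) x
              (EuclideanSpace.single i 1))) -
        (1 + δ * (2 - β) * ((n : ℝ) + 1 / 2) * R ^ (-β) +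
          δ * (β - 2) * β * R ^ (-β - 2) * ‖x‖ ^ 2)| ≤ C * R ^ (-(2 * β)) := by
  obtain ⟨hβ₀, hβ₂⟩ := hβ
  have hR₀ : 0 < (2 * δ) ^ β⁻¹ := by positivity
  refine ⟨2 * 4 ^ n * (n + 1) * δ ^ 2, by positivity, 2 + (2 * δ) ^ β⁻¹, by linarith,
    fun x t ht hR => ?_⟩
  have hρ : t < ‖x‖ ^ 2 := sub_pos.mp (sqrt_pos.mp (by linarith))
  have hρ₀ : 0 ≤ ‖x‖ ^ 2 - t := by linarith
  have hγ : (2 - β) / 2 - 1 = -β / 2 := by ring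
  have hm : δ * (‖x‖ ^ 2 - t) ^ ((2 - β) / 2 - 1) ≤ 1 / 2 := by
    rw [hγ, rpow_div_two_eq_sqrt _ hρ₀]
    exact mul_rpow_neg_le_half hδ hβ₀ (by linarith)
  have key := abs_neg_deriv_mul_det_hessian_sub_le (n := n) (γ := (2 - β) / 2) hδ.le
    (by linarith) (by linarith) ht hρ hm
  rw [hγ, show (2 - β) / 2 - 2 = (-β - 2) / 2 by ring, rpow_div_two_eq_sqrt _ hρ₀,
    rpow_div_two_eq_sqrt _ hρ₀] at key
  have hsq : √(‖x‖ ^ 2 - t) ^ (-(2 * β)) = (√(‖x‖ ^ 2 - t) ^ (-β)) ^ 2 := by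
    rw [← rpow_mul_natCast (sqrt_nonneg _)]
    ring_nf
  dsimp only
  refine Eq.trans_le ?_ (key.trans_eq ?_)
  · congr 2
    ring
  · rw [hsq]
    ring

/-- Sharpness example for `β ∈ (0,2)`, `β ≠ 1`: for
`u(x,t) = ½|x|² − t + δ R^{2−β}` with `R = (|x|²−t)^{1/2}`, one has the expansion
`−u_t det D²ₓu = 1 + δ(2−β)(n+½)R^{−β} + δ(β−2)β R^{−β−2}|x|² + O(R^{−2β})`. -/
theorem sharpness_example_beta_ne_one (n : ℕ) (hn : 1 ≤ n) (β δ : ℝ)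
    (hβ : 0 < β ∧ β < 2) (hβ1 : β ≠ 1) (hδ : 0 < δ) :
    ∃ C > 0, ∃ R₀ > 2, ∀ (x : EuclideanSpace ℝ (Fin n)) (t : ℝ), t ≤ 0 →
      R₀ ≤ Real.sqrt (‖x‖ ^ 2 - t) →
      letI u : EuclideanSpace ℝ (Fin n) → ℝ → ℝ :=
        fun y s => ‖y‖ ^ 2 / 2 - s + δ * (‖y‖ ^ 2 - s) ^ ((2 - β) / 2)
      letI R : ℝ := Real.sqrt (‖x‖ ^ 2 - t)
      |(-(deriv (fun s => u x s) t)) *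
          (Matrix.det (Matrix.of fun i j : Fin n =>
            fderiv ℝ (fun y => fderiv ℝ (fun z => u z t) y (EuclideanSpace.single j 1)) x
              (EuclideanSpace.single i 1))) -
        (1 + δ * (2 - β) * ((n : ℝ) + 1 / 2) * R ^ (-β) +
          δ * (β - 2) * β * R ^ (-β - 2) * ‖x‖ ^ 2)| ≤ C * R ^ (-(2 * β)) :=
  sharpness_example_beta_ne_one_general n β δ hβ hδ
end

section
/- Let u(x,t) := ½|x|² − t + δ ln R on the region R := (|x|² − t)^{1/2} > 2 of ℝⁿ × (−∞,0], with δ > 0. Then −u_t · det(D²ₓu) = 1 + δ(n + ½) R^{−2} − 2δ |x|² R^{−4} + O(R^{−4}) as R → ∞; in particular −u_t det D²ₓu = 1 + O(R^{−2}). -/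
/-!
With `ρ = R² = |x|² - t`, the function `u(·, t)` is radial with profile
`r ↦ r/2 - t + (δ/2) log (r - t)`, so `u_t = -1 - δ/(2ρ)` and
`D²ₓu = (1 + δ/ρ) I - (2δ/ρ²) x xᵀ`. By the matrix determinant lemma,
`-u_t det D²ₓu = (1 + ε/2) (1 + ε)ⁿ (1 - 2εm/(1 + ε))` with `ε = δ/ρ` and `m = |x|²/ρ ∈ [0, 1]`.
Its first-order expansion in `ε` is `1 + (n + 1/2) ε - 2εm`, with an error `O(ε²) = O(R⁻⁴)`
uniform in `m` as soon as `ε ≤ 1`.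
-/

open Real Filter Topology RealInnerProductSpace

theorem Real.hasDerivAt_log_sqrt {x : ℝ} (hx : 0 < x) :
    HasDerivAt (fun y => log √y) (2 * x)⁻¹ x := by
  have hlog : (fun y => log √y) =ᶠ[𝓝 x] fun y => log y / 2 := by
    filter_upwards [lt_mem_nhds hx] with y hy using log_sqrt hy.le
  rw [mul_inv, mul_comm, ← div_eq_mul_inv]
  exact ((hasDerivAt_log hx.ne').div_const 2).congr_of_eventuallyEq hlog

namespace Matrix
variable {m K : Type*} [Fintype m] [DecidableEq m] [Field K]

theorem det_smul_one_add_vecMulVec {a : K} (ha : a ≠ 0) (u v : m → K) :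
    (a • 1 + vecMulVec u v).det = a ^ Fintype.card m * (1 + a⁻¹ * (v ⬝ᵥ u)) := by
  have : a • 1 + vecMulVec u v = a • (1 + replicateCol Unit (a⁻¹ • u) * replicateRow Unit v) := by
    rw [← vecMulVec_eq, smul_add, smul_vecMulVec, smul_smul, mul_inv_cancel₀ ha, one_smul]
  rw [this, det_smul, det_one_add_replicateCol_mul_replicateRow, dotProduct_smul, smul_eq_mul]

end Matrix

theorem natCast_le_four_pow (n : ℕ) : (n : ℝ) ≤ 4 ^ n := by
  exact_mod_cast Nat.lt_two_pow_self.le.trans (Nat.pow_le_pow_left (by norm_num) n)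

theorem one_add_pow_le_one_add_mul_add {ε : ℝ} (hε0 : 0 ≤ ε) (hε1 : ε ≤ 1) (n : ℕ) :
    (1 + ε) ^ n ≤ 1 + n * ε + 4 ^ n * ε ^ 2 := by
  induction n with
  | zero => simp [sq_nonneg]
  | succ n ih =>
    calc (1 + ε) ^ (n + 1) = (1 + ε) ^ n * (1 + ε) := pow_succ _ _
      _ ≤ (1 + n * ε + 4 ^ n * ε ^ 2) * (1 + ε) := by gcongr
      _ ≤ 1 + (n + 1 : ℕ) * ε + 4 ^ (n + 1) * ε ^ 2 := by
        push_cast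
        rw [pow_succ (4 : ℝ) n]
        nlinarith [mul_le_mul_of_nonneg_left hε1 (by positivity : (0:ℝ) ≤ 4 ^ n * ε ^ 2),
          mul_le_mul_of_nonneg_right (natCast_le_four_pow n) (sq_nonneg ε)]

theorem abs_sub_linearization_le {ε m : ℝ} (hε0 : 0 ≤ ε) (hε1 : ε ≤ 1) (hm0 : 0 ≤ m)
    (hm1 : m ≤ 1) (n : ℕ) :
    |(1 + ε / 2) * (1 + ε) ^ n * (1 - 2 * ε * m / (1 + ε)) - (1 + (n + 1 / 2) * ε - 2 * ε * m)|
      ≤ 6 * 4 ^ n * ε ^ 2 := by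
  set q := (1 + ε) ^ n
  set d := ε ^ 2 * m / (1 + ε)
  have h4n : (1 : ℝ) ≤ 4 ^ n := one_le_pow₀ (by norm_num)
  have hq_lower : 1 + n * ε ≤ q := one_add_mul_le_pow (by linarith) n
  have hq_upper : q ≤ 1 + n * ε + 4 ^ n * ε ^ 2 := one_add_pow_le_one_add_mul_add hε0 hε1 n
  have hd0 : 0 ≤ d := by positivity
  have hd : d ≤ ε ^ 2 :=
    (div_le_self (by positivity) (by linarith)).trans (mul_le_of_le_one_right (sq_nonneg ε) hm1)
  have hsplit : (1 + ε / 2) * q * (1 - 2 * ε * m / (1 + ε)) - (1 + (n + 1 / 2) * ε - 2 * ε * m)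
      = (q - 1 - n * ε) + d + ((1 / 2 - 2 * m) * ε + d) * (q - 1) := by
    simp only [d]; field_simp; ring
  have hA : |q - 1 - n * ε| ≤ 4 ^ n * ε ^ 2 := abs_le.2 ⟨by linarith, by linarith⟩
  have hd' : |d| ≤ ε ^ 2 := abs_le.2 ⟨by linarith, hd⟩
  have hB : |(1 / 2 - 2 * m) * ε + d| ≤ 2 * ε := abs_le.2 ⟨by nlinarith, by nlinarith⟩
  have hQ : |q - 1| ≤ 2 * 4 ^ n * ε := abs_le.2 ⟨by nlinarith, by
    nlinarith [mul_le_mul_of_nonneg_right (natCast_le_four_pow n) hε0,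
      mul_le_mul_of_nonneg_left (pow_le_of_le_one hε0 hε1 two_ne_zero)
        (by positivity : (0:ℝ) ≤ 4 ^ n)]⟩
  rw [hsplit]
  calc _ ≤ |q - 1 - n * ε| + |d| + |(1 / 2 - 2 * m) * ε + d| * |q - 1| := by
        rw [← abs_mul]; exact abs_add_three _ _ _
    _ ≤ 4 ^ n * ε ^ 2 + ε ^ 2 + 2 * ε * (2 * 4 ^ n * ε) := by gcongr
    _ ≤ 6 * 4 ^ n * ε ^ 2 := by nlinarith

section Radial
variable {E : Type*} [NormedAddCommGroup E] [InnerProductSpace ℝ E] {F F' : ℝ → ℝ}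

theorem hasFDerivAt_comp_norm_sq {r : ℝ} {y : E} (hF : HasDerivAt F r (‖y‖ ^ 2)) :
    HasFDerivAt (fun z : E => F (‖z‖ ^ 2)) ((2 * r) • innerSL ℝ y) y :=
  (hF.comp_hasFDerivAt y (hasStrictFDerivAt_norm_sq y).hasFDerivAt).congr_fderiv <| by
    ext v; simp; ring

theorem fderiv_fderiv_comp_norm_sq {F'' : ℝ} {x : E}
    (hF : ∀ᶠ r in 𝓝 (‖x‖ ^ 2), HasDerivAt F (F' r) r) (hF' : HasDerivAt F' F'' (‖x‖ ^ 2))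
    (v w : E) :
    fderiv ℝ (fun y => fderiv ℝ (fun z => F (‖z‖ ^ 2)) y w) x v
      = 2 * F' (‖x‖ ^ 2) * ⟪v, w⟫ + 4 * F'' * (⟪x, v⟫ * ⟪x, w⟫) := by
  have hgrad : (fun y => fderiv ℝ (fun z => F (‖z‖ ^ 2)) y w)
      =ᶠ[𝓝 x] fun y => 2 * F' (‖y‖ ^ 2) * ⟪w, y⟫ := by
    filter_upwards [(continuous_norm.pow 2).continuousAt.eventually hF] with y hy
    simp [(hasFDerivAt_comp_norm_sq hy).fderiv, real_inner_comm]
  have hinner : HasFDerivAt (fun y : E => ⟪w, y⟫) (innerSL ℝ w) x := (innerSL ℝ w).hasFDerivAt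
  rw [hgrad.fderiv_eq, (((hasFDerivAt_comp_norm_sq hF').const_mul 2).fun_mul hinner).fderiv]
  simp [real_inner_comm]
  ring

end Radial

theorem EuclideanSpace.hessian_comp_norm_sq {ι : Type*} [Fintype ι] [DecidableEq ι]
    {F F' : ℝ → ℝ} {F'' : ℝ} {x : EuclideanSpace ℝ ι}
    (hF : ∀ᶠ r in 𝓝 (‖x‖ ^ 2), HasDerivAt F (F' r) r) (hF' : HasDerivAt F' F'' (‖x‖ ^ 2)) :
    Matrix.of (fun i j => fderiv ℝ (fun y => fderiv ℝ
        (fun z : EuclideanSpace ℝ ι => F (‖z‖ ^ 2)) y (EuclideanSpace.single j 1)) x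
        (EuclideanSpace.single i 1))
      = (2 * F' (‖x‖ ^ 2)) • 1 + Matrix.vecMulVec ((4 * F'') • ⇑x) ⇑x := by
  ext i j
  rw [Matrix.of_apply, fderiv_fderiv_comp_norm_sq hF hF']
  simp [EuclideanSpace.inner_single_right, Matrix.one_apply, Matrix.vecMulVec_apply, eq_comm]

namespace SharpnessExample

variable (δ : ℝ)

theorem hasDerivAt_time {a t : ℝ} (ht : t < a) :
    HasDerivAt (fun s => a / 2 - s + δ * log √(a - s)) (-1 - δ * (2 * (a - t))⁻¹) t := by
  have h := (hasDerivAt_log_sqrt (sub_pos.2 ht)).comp t (hasDerivAt_id' t |>.const_sub a)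
  exact ((hasDerivAt_id' t).const_sub (a / 2) |>.add (h.const_mul δ)).congr_deriv (by ring)

theorem hasDerivAt_radialProfile {t r : ℝ} (hr : t < r) :
    HasDerivAt (fun r => r / 2 - t + δ * log √(r - t)) (2⁻¹ + δ * (2 * (r - t))⁻¹) r := by
  have h := (hasDerivAt_log_sqrt (sub_pos.2 hr)).comp r (hasDerivAt_id' r |>.sub_const t)
  exact ((hasDerivAt_id' r).div_const 2 |>.sub_const t |>.add (h.const_mul δ)).congr_deriv
    (by ring)

theorem hasDerivAt_radialProfile_deriv {t r : ℝ} (hr : t < r) :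
    HasDerivAt (fun r => 2⁻¹ + δ * (2 * (r - t))⁻¹) (-δ / (2 * (r - t) ^ 2)) r := by
  have h := ((hasDerivAt_id' r).sub_const t |>.const_mul 2).inv (by linarith)
  exact ((h.const_mul δ).const_add 2⁻¹).congr_deriv (by field_simp)

theorem hessian_eq {ι : Type*} [Fintype ι] [DecidableEq ι] {t : ℝ}
    {x : EuclideanSpace ℝ ι} (hx : t < ‖x‖ ^ 2) :
    Matrix.of (fun i j => fderiv ℝ (fun y => fderiv ℝ
        (fun z : EuclideanSpace ℝ ι => ‖z‖ ^ 2 / 2 - t + δ * log √(‖z‖ ^ 2 - t)) y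
        (EuclideanSpace.single j 1)) x (EuclideanSpace.single i 1))
      = (1 + δ / (‖x‖ ^ 2 - t)) • 1 + Matrix.vecMulVec ((-2 * δ / (‖x‖ ^ 2 - t) ^ 2) • ⇑x) ⇑x := by
  have hF : ∀ᶠ r in 𝓝 (‖x‖ ^ 2), HasDerivAt (fun r => r / 2 - t + δ * log √(r - t))
      (2⁻¹ + δ * (2 * (r - t))⁻¹) r := by
    filter_upwards [lt_mem_nhds hx] with r hr using hasDerivAt_radialProfile δ hr
  rw [EuclideanSpace.hessian_comp_norm_sq hF (hasDerivAt_radialProfile_deriv δ hx)]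
  congr 3 <;> field_simp; ring

end SharpnessExample

theorem sharpness_example_beta_eq_two_general (n : ℕ) (δ : ℝ) (hδ : 0 < δ) :
    ∃ C > 0, ∃ R₀ > 2, ∀ (x : EuclideanSpace ℝ (Fin n)) (t : ℝ), t ≤ 0 →
      R₀ ≤ Real.sqrt (‖x‖ ^ 2 - t) →
      letI u : EuclideanSpace ℝ (Fin n) → ℝ → ℝ :=
        fun y s => ‖y‖ ^ 2 / 2 - s + δ * Real.log (Real.sqrt (‖y‖ ^ 2 - s))
      letI R : ℝ := Real.sqrt (‖x‖ ^ 2 - t)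
      |(-(deriv (fun s => u x s) t)) *
          (Matrix.det (Matrix.of fun i j : Fin n =>
            fderiv ℝ (fun y => fderiv ℝ (fun z => u z t) y (EuclideanSpace.single j 1)) x
              (EuclideanSpace.single i 1))) -
        (1 + δ * ((n : ℝ) + 1 / 2) * R ^ (-(2:ℝ)) - 2 * δ * ‖x‖ ^ 2 * R ^ (-(4:ℝ)))|
        ≤ C * R ^ (-(4:ℝ)) := by
  refine ⟨6 * 4 ^ n * δ ^ 2, by positivity, 2 + √δ, by linarith [sqrt_pos.2 hδ], ?_⟩
  intro x t ht hR
  set ρ := ‖x‖ ^ 2 - t with hρ_def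
  have hδρ : δ ≤ ρ := (sqrt_le_sqrt_iff' hδ).1 (by linarith [sqrt_nonneg δ])
  have hρ : 0 < ρ := hδ.trans_le hδρ
  have hR2 : √ρ ^ (-(2:ℝ)) = ρ⁻¹ := by
    rw [sqrt_eq_rpow, ← rpow_mul hρ.le]; norm_num [rpow_neg_one]
  have hR4 : √ρ ^ (-(4:ℝ)) = (ρ ^ 2)⁻¹ := by
    rw [sqrt_eq_rpow, ← rpow_mul hρ.le]; norm_num [rpow_neg hρ.le]
  have hxx : ⇑x ⬝ᵥ ⇑x = ‖x‖ ^ 2 := by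
    rw [← real_inner_self_eq_norm_sq, EuclideanSpace.inner_eq_star_dotProduct]; simp
  rw [(SharpnessExample.hasDerivAt_time δ (by linarith : t < ‖x‖ ^ 2)).deriv,
    SharpnessExample.hessian_eq δ (by linarith), Matrix.det_smul_one_add_vecMulVec (by positivity),
    dotProduct_smul, smul_eq_mul, hxx, Fintype.card_fin, hR2, hR4, ← hρ_def,
    show 6 * 4 ^ n * δ ^ 2 * (ρ ^ 2)⁻¹ = 6 * 4 ^ n * (δ / ρ) ^ 2 by
      rw [div_pow, div_eq_mul_inv, mul_assoc]]
  have key := abs_sub_linearization_le (ε := δ / ρ) (m := ‖x‖ ^ 2 / ρ) (by positivity)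
    ((div_le_one hρ).2 hδρ) (by positivity) ((div_le_one hρ).2 (by linarith)) n
  convert key using 2
  field_simp
  ring

/-- Sharpness example for `β = 2`: for `u(x,t) = ½|x|² − t + δ ln R` with
`R = (|x|²−t)^{1/2}`, one has
`−u_t det D²ₓu = 1 + δ(n+½)R^{−2} − 2δ|x|²R^{−4} + O(R^{−4})`. -/
theorem sharpness_example_beta_eq_two (n : ℕ) (hn : 1 ≤ n) (δ : ℝ) (hδ : 0 < δ) :
    ∃ C > 0, ∃ R₀ > 2, ∀ (x : EuclideanSpace ℝ (Fin n)) (t : ℝ), t ≤ 0 →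
      R₀ ≤ Real.sqrt (‖x‖ ^ 2 - t) →
      letI u : EuclideanSpace ℝ (Fin n) → ℝ → ℝ :=
        fun y s => ‖y‖ ^ 2 / 2 - s + δ * Real.log (Real.sqrt (‖y‖ ^ 2 - s))
      letI R : ℝ := Real.sqrt (‖x‖ ^ 2 - t)
      |(-(deriv (fun s => u x s) t)) *
          (Matrix.det (Matrix.of fun i j : Fin n =>
            fderiv ℝ (fun y => fderiv ℝ (fun z => u z t) y (EuclideanSpace.single j 1)) x
              (EuclideanSpace.single i 1))) -
        (1 + δ * ((n : ℝ) + 1 / 2) * R ^ (-(2:ℝ)) - 2 * δ * ‖x‖ ^ 2 * R ^ (-(4:ℝ)))|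
        ≤ C * R ^ (-(4:ℝ)) :=
  sharpness_example_beta_eq_two_general n δ hδ
end

section
/- Let f : ℝⁿ × (−∞, 0] → ℝ satisfy: D_{xᵢ}f is continuous, and |D_{xᵢ}f(x,t)| ≤ C₀ (|x|² − t)^{−(β+1)/2} for (|x|²−t)^{1/2} ≥ C₀, with β ∈ (1,2]. Define v_i(x,t) := ∫_{ℝⁿ×(−∞,0]} Γ(y,−s) D_{xᵢ}f(x−y, t+s) dy ds, where Γ is the heat kernel. Then there is C > 0 depending only on n, C₀, β such that |v_i(x,t)| ≤ C (|x|² − t)^{(1−β)/2} whenever (|x|² − t)^{1/2} ≥ C₀. -/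
/-!
Write `p = (β + 1) / 2` and `ρ(z, u)² = ‖z‖² - u`. The global bound `M` takes care of `ρ < C₀`, so
`|F| ≤ K ρ^{-2p}` everywhere, and it suffices to bound the heat potential of `K ρ^{-2p}` at a point
`(x, t)` with `ρ(x, t)² ≥ 4b`. Where `ρ(x - y, t - σ)² ≥ b` it is at least `max σ b`, and since
`Γ(·, σ)` has mass one this part contributes `K ∫₀^∞ max(σ, b)^{-p} dσ ≍ b^{1-p}`, finite as
`p > 1`. Elsewhere `‖y‖² ≥ b / 2`, so `Γ(y, σ) ≤ 2^{n/2} (16 σ / b) Γ(y, 2σ)` and this part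
contributes `≍ b⁻¹ ∫₀^b σ^{1-p} dσ ≍ b^{1-p}`, finite as `p < 2`.
-/

open Real MeasureTheory Set Module

theorem abs_le_mul_rpow_neg_of_le_of_decay {v M C₀ Q p : ℝ} (hp : 0 ≤ p) (hQ : 0 < Q)
    (hC₀ : 0 < C₀) (hbdd : |v| ≤ M) (hdecay : C₀ ≤ √Q → |v| ≤ C₀ * Q ^ (-p)) :
    |v| ≤ (C₀ + M * (C₀ ^ 2) ^ p) * Q ^ (-p) := by
  have hM : 0 ≤ M := (abs_nonneg v).trans hbdd
  have hQp : 0 ≤ Q ^ (-p) := rpow_nonneg hQ.le _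
  have hMC : 0 ≤ M * (C₀ ^ 2) ^ p := mul_nonneg hM (rpow_nonneg (sq_nonneg C₀) p)
  by_cases h : C₀ ≤ √Q
  · nlinarith [hdecay h]
  · have hQC : Q ≤ C₀ ^ 2 := ((sqrt_lt' hC₀).1 (not_le.1 h)).le
    have h1 : 1 ≤ (C₀ ^ 2) ^ p * Q ^ (-p) := by
      rw [rpow_neg hQ.le, ← div_eq_mul_inv, ← div_rpow (sq_nonneg C₀) hQ.le]
      exact one_le_rpow ((one_le_div hQ).2 hQC) hp
    nlinarith [mul_le_mul_of_nonneg_left h1 hM]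

theorem le_sq_norm_of_sq_norm_sub_lt {E : Type*} [SeminormedAddCommGroup E] {x y : E} {b : ℝ}
    (hx : 3 * b ≤ ‖x‖ ^ 2) (hxy : ‖x - y‖ ^ 2 < b) : b / 2 ≤ ‖y‖ ^ 2 := by
  have htri : ‖x‖ ^ 2 ≤ (‖x - y‖ + ‖y‖) ^ 2 :=
    pow_le_pow_left₀ (norm_nonneg x) (by linarith [norm_sub_norm_le x y]) 2
  nlinarith [sq_nonneg (‖x - y‖ - 2 * ‖y‖)]

theorem integrableOn_Ioi_max_rpow_neg {b p : ℝ} (hb : 0 < b) (hp : 1 < p) :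
    IntegrableOn (fun σ => max σ b ^ (-p)) (Ioi 0) := by
  rw [← Ioc_union_Ioi_eq_Ioi hb.le]
  refine IntegrableOn.union ?_ ?_
  · exact IntegrableOn.congr_fun (f := fun _ => b ^ (-p)) (integrableOn_const measure_Ioc_lt_top.ne)
      (fun σ hσ => by simp only [max_eq_right hσ.2]) measurableSet_Ioc
  · exact (integrableOn_Ioi_rpow_of_lt (neg_lt_neg hp) hb).congr_fun
      (fun σ hσ => by simp only [max_eq_left (mem_Ioi.1 hσ).le]) measurableSet_Ioi

theorem integral_Ioi_max_rpow_neg {b p : ℝ} (hb : 0 < b) (hp : 1 < p) :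
    ∫ σ in Ioi 0, max σ b ^ (-p) = p / (p - 1) * b ^ (1 - p) := by
  have hint := integrableOn_Ioi_max_rpow_neg hb hp
  rw [← Ioc_union_Ioi_eq_Ioi hb.le, setIntegral_union (Ioc_disjoint_Ioi le_rfl) measurableSet_Ioi
      (hint.mono_set Ioc_subset_Ioi_self) (hint.mono_set (Ioi_subset_Ioi hb.le)),
    setIntegral_congr_fun measurableSet_Ioc (g := fun _ => b ^ (-p))
      (fun σ hσ => by simp only [max_eq_right hσ.2]),
    setIntegral_congr_fun measurableSet_Ioi (g := fun σ => σ ^ (-p))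
      (fun σ hσ => by simp only [max_eq_left (mem_Ioi.1 hσ).le]),
    setIntegral_const, integral_Ioi_rpow_of_lt (neg_lt_neg hp) hb,
    Real.volume_real_Ioc_of_le hb.le, smul_eq_mul, sub_zero]
  have h₁ : b * b ^ (-p) = b ^ (1 - p) := by rw [sub_eq_add_neg, rpow_add hb, rpow_one]
  have h₂ : -p + 1 = 1 - p := by ring
  have h₃ : 1 - p ≠ 0 := by linarith
  have h₄ : p - 1 ≠ 0 := by linarith
  rw [h₁, h₂]
  field_simp
  ring

theorem integrableOn_Ioi_indicator_Ioc_rpow {b q : ℝ} (hq : -1 < q) :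
    IntegrableOn ((Ioc 0 b).indicator (· ^ q)) (Ioi 0) :=
  ((integrable_indicator_iff measurableSet_Ioc).2
    (intervalIntegral.intervalIntegrable_rpow' hq).1).integrableOn

theorem integral_Ioi_indicator_Ioc_rpow {b q : ℝ} (hb : 0 ≤ b) (hq : -1 < q) :
    ∫ σ in Ioi 0, (Ioc 0 b).indicator (· ^ q) σ = b ^ (q + 1) / (q + 1) := by
  rw [setIntegral_indicator measurableSet_Ioc, inter_eq_right.2 Ioc_subset_Ioi_self,
    ← intervalIntegral.integral_of_le hb, integral_rpow (Or.inl hq),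
    zero_rpow (by linarith), sub_zero]

theorem volume_restrict_setOf_snd_nonpos {α : Type*} [MeasureSpace α]
    [SFinite (volume : Measure α)] :
    (volume : Measure (α × ℝ)).restrict {q | q.2 ≤ 0} =
      (volume : Measure α).prod (volume.restrict (Iio 0)) := by
  rw [show {q : α × ℝ | q.2 ≤ 0} = univ ×ˢ Iic 0 by ext; simp, Measure.volume_eq_prod,
    ← Measure.prod_restrict, Measure.restrict_univ, Measure.restrict_congr_set Iio_ae_eq_Iic]

section HeatKernel

variable {E : Type*} [NormedAddCommGroup E]

noncomputable def heatKernel (n : ℕ) (y : E) (σ : ℝ) : ℝ :=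
  (4 * π * σ) ^ (-(n : ℝ) / 2) * exp (-‖y‖ ^ 2 / (4 * σ))

theorem heatKernel_nonneg (n : ℕ) (y : E) {σ : ℝ} (hσ : 0 ≤ σ) : 0 ≤ heatKernel n y σ := by
  unfold heatKernel; positivity

theorem heatKernel_mul_sq_norm_le (n : ℕ) (y : E) {σ : ℝ} (hσ : 0 < σ) :
    heatKernel n y σ * ‖y‖ ^ 2 ≤ 2 ^ ((n : ℝ) / 2) * (8 * σ) * heatKernel n y (2 * σ) := by
  set u := ‖y‖ ^ 2 / (8 * σ)
  have hy : ‖y‖ ^ 2 = 8 * σ * u := by simp only [u]; field_simp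
  set c := (4 * π * σ) ^ (-(n : ℝ) / 2)
  have hk : heatKernel n y σ = c * exp (-u) * exp (-u) := by
    rw [heatKernel, hy, mul_assoc c, ← exp_add]
    congr 2
    field_simp
    ring
  have hk₂ : heatKernel n y (2 * σ) = 2 ^ (-(n : ℝ) / 2) * c * exp (-u) := by
    rw [heatKernel, hy, show 4 * π * (2 * σ) = 2 * (4 * π * σ) by ring,
      mul_rpow (by norm_num) (by positivity)]
    congr 2
    field_simp
    ring
  have hu : exp (-u) * ‖y‖ ^ 2 ≤ 8 * σ := by
    rw [exp_neg, ← div_eq_inv_mul, div_le_iff₀ (exp_pos u), hy]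
    gcongr
    linarith [add_one_le_exp u]
  have h2 : (2 : ℝ) ^ ((n : ℝ) / 2) * 2 ^ (-(n : ℝ) / 2) = 1 := by
    rw [← rpow_add two_pos]; ring_nf; exact rpow_zero 2
  calc heatKernel n y σ * ‖y‖ ^ 2 = c * exp (-u) * (exp (-u) * ‖y‖ ^ 2) := by rw [hk]; ring
    _ ≤ c * exp (-u) * (8 * σ) := by gcongr
    _ = 2 ^ ((n : ℝ) / 2) * (8 * σ) * heatKernel n y (2 * σ) := by
      rw [hk₂]; linear_combination (-(c * exp (-u) * (8 * σ))) * h2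

theorem heatKernel_mul_abs_le (n : ℕ) {x y : E} {t b σ p K v : ℝ} (ht : t ≤ 0) (hb : 0 < b)
    (hbx : 4 * b ≤ ‖x‖ ^ 2 - t) (hσ : 0 < σ) (hp : 0 ≤ p) (hK : 0 ≤ K) (hv : |v| ≤ K * (‖x - y‖ ^ 2 - (t - σ)) ^ (-p)) :
    heatKernel n y σ * |v| ≤ heatKernel n y σ * (K * max σ b ^ (-p)) +
      heatKernel n y (2 * σ) *
        (2 ^ ((n : ℝ) / 2) * 16 * K / b * (Ioc 0 b).indicator (· ^ (1 - p)) σ) := by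
  set Q := ‖x - y‖ ^ 2 - (t - σ)
  have hxy := sq_nonneg ‖x - y‖
  have hσQ : σ ≤ Q := by linarith
  have hk := heatKernel_nonneg n y hσ.le
  have hk₂ := heatKernel_nonneg n y (by positivity : 0 ≤ 2 * σ)
  rcases le_or_gt b Q with hbQ | hQb
  · have hv' : |v| ≤ K * max σ b ^ (-p) := hv.trans <| mul_le_mul_of_nonneg_left
      (rpow_le_rpow_of_nonpos (lt_max_of_lt_left hσ) (max_le hσQ hbQ) (neg_nonpos.2 hp)) hK
    have hw₂ : 0 ≤ 2 ^ ((n : ℝ) / 2) * 16 * K / b * (Ioc 0 b).indicator (· ^ (1 - p)) σ :=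
      mul_nonneg (by positivity) (indicator_nonneg (fun τ hτ => rpow_nonneg hτ.1.le _) _)
    nlinarith [mul_le_mul_of_nonneg_left hv' hk, mul_nonneg hk₂ hw₂]
  · have hv' : |v| ≤ K * σ ^ (-p) := hv.trans <| mul_le_mul_of_nonneg_left
      (rpow_le_rpow_of_nonpos hσ hσQ (neg_nonpos.2 hp)) hK
    have hy : b / 2 ≤ ‖y‖ ^ 2 := le_sq_norm_of_sq_norm_sub_lt (x := x) (by linarith) (by linarith)
    have hkb : heatKernel n y σ * b ≤ 2 ^ ((n : ℝ) / 2) * 16 * σ * heatKernel n y (2 * σ) := by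
      nlinarith [heatKernel_mul_sq_norm_le n y hσ, mul_le_mul_of_nonneg_left hy hk]
    have hσp : σ * σ ^ (-p) = σ ^ (1 - p) := by
      rw [sub_eq_add_neg, rpow_add hσ, rpow_one]
    rw [indicator_of_mem (show σ ∈ Ioc 0 b from ⟨hσ, by linarith⟩), ← hσp]
    calc heatKernel n y σ * |v| ≤ heatKernel n y σ * (K * σ ^ (-p)) :=
          mul_le_mul_of_nonneg_left hv' hk
      _ = heatKernel n y σ * b * (K * σ ^ (-p)) / b := by field_simp
      _ ≤ 2 ^ ((n : ℝ) / 2) * 16 * σ * heatKernel n y (2 * σ) * (K * σ ^ (-p)) / b := by gcongr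
      _ = heatKernel n y (2 * σ) * (2 ^ ((n : ℝ) / 2) * 16 * K / b * (σ * σ ^ (-p))) := by ring
      _ ≤ _ := le_add_of_nonneg_left (mul_nonneg hk (mul_nonneg hK (rpow_nonneg
          (lt_max_of_lt_left hσ).le _)))

variable [InnerProductSpace ℝ E] [FiniteDimensional ℝ E] [MeasurableSpace E] [BorelSpace E]

theorem integral_heatKernel {σ : ℝ} (hσ : 0 < σ) : ∫ y : E, heatKernel (finrank ℝ E) y σ = 1 := by
  have hb : 0 < (4 * σ)⁻¹ := by positivity
  have hexp : ∀ y : E, exp (-‖y‖ ^ 2 / (4 * σ)) = exp (-(4 * σ)⁻¹ * ‖y‖ ^ 2) := fun y => by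
    ring_nf
  simp only [heatKernel, hexp]
  rw [integral_const_mul, GaussianFourier.integral_rexp_neg_mul_sq_norm hb, div_inv_eq_mul,
    neg_div, rpow_neg (by positivity), show π * (4 * σ) = 4 * π * σ by ring]
  exact inv_mul_cancel₀ (by positivity)

theorem integrable_heatKernel {σ : ℝ} (hσ : 0 < σ) :
    Integrable (fun y : E => heatKernel (finrank ℝ E) y σ) :=
  .of_integral_ne_zero (by rw [integral_heatKernel hσ]; exact one_ne_zero)

theorem integrable_heatKernel_mul_prod {c : ℝ} (hc : 0 < c) {w : ℝ → ℝ}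
    (hw : IntegrableOn w (Ioi 0)) :
    Integrable (fun q : E × ℝ => heatKernel (finrank ℝ E) q.1 (c * -q.2) * w (-q.2))
      ((volume : Measure E).prod (volume.restrict (Iio 0))) := by
  have hw' : IntegrableOn (fun s => w (-s)) (Iio 0) :=
    IntegrableOn.comp_neg_Iio (μ := volume) (c := (0 : ℝ)) (by rwa [neg_zero])
  have hmeas : Measurable fun q : E × ℝ => heatKernel (finrank ℝ E) q.1 (c * -q.2) := by
    unfold heatKernel; fun_prop
  have hmeas' : AEStronglyMeasurable
      (fun q : E × ℝ => heatKernel (finrank ℝ E) q.1 (c * -q.2) * w (-q.2))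
      ((volume : Measure E).prod (volume.restrict (Iio 0))) :=
    hmeas.aestronglyMeasurable.mul
      (hw'.aestronglyMeasurable.comp_quasiMeasurePreserving Measure.quasiMeasurePreserving_snd)
  refine (integrable_prod_iff' hmeas').2 ⟨?_, hw'.norm.congr ?_⟩
  all_goals filter_upwards [ae_restrict_mem measurableSet_Iio] with s hs
  · exact (integrable_heatKernel (E := E) (mul_pos hc (neg_pos.2 hs))).mul_const _
  · simp only [norm_mul, norm_of_nonneg (heatKernel_nonneg _ _ (mul_pos hc (neg_pos.2 hs)).le)]
    rw [integral_mul_const, integral_heatKernel (mul_pos hc (neg_pos.2 hs)), one_mul]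

theorem integral_heatKernel_mul_prod {c : ℝ} (hc : 0 < c) {w : ℝ → ℝ}
    (hw : IntegrableOn w (Ioi 0)) :
    ∫ q, heatKernel (finrank ℝ E) q.1 (c * -q.2) * w (-q.2)
        ∂(volume : Measure E).prod (volume.restrict (Iio 0)) = ∫ σ in Ioi 0, w σ := by
  rw [integral_prod_symm _ (integrable_heatKernel_mul_prod hc hw),
    setIntegral_congr_fun measurableSet_Iio (g := fun s => w (-s)) fun s hs => by
      dsimp only
      rw [integral_mul_const, integral_heatKernel (mul_pos hc (neg_pos.2 hs)), one_mul]]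
  have h := integral_comp_neg_Ioi 0 fun s => w (-s)
  simp only [neg_neg, neg_zero, integral_Iic_eq_integral_Iio] at h
  exact h.symm

theorem abs_integral_heatKernel_mul_le {x : E} {t b p K : ℝ} (G : E × ℝ → ℝ) (ht : t ≤ 0)
    (hb : 0 < b) (hbx : 4 * b ≤ ‖x‖ ^ 2 - t) (hp₁ : 1 < p) (hp₂ : p < 2) (hK : 0 ≤ K)
    (hG : ∀ y, ∀ s < 0, |G (y, s)| ≤ K * (‖x - y‖ ^ 2 - (t + s)) ^ (-p)) :
    |∫ q, heatKernel (finrank ℝ E) q.1 (-q.2) * G q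
        ∂(volume : Measure E).prod (volume.restrict (Iio 0))| ≤
      K * (p / (p - 1) + 2 ^ ((finrank ℝ E : ℝ) / 2) * 16 / (2 - p)) * b ^ (1 - p) := by
  set n := finrank ℝ E
  set w₁ : ℝ → ℝ := fun σ => K * max σ b ^ (-p)
  set w₂ : ℝ → ℝ := fun σ => 2 ^ ((n : ℝ) / 2) * 16 * K / b * (Ioc 0 b).indicator (· ^ (1 - p)) σ
  have hw₁ : IntegrableOn w₁ (Ioi 0) := (integrableOn_Ioi_max_rpow_neg hb hp₁).const_mul K
  have hw₂ : IntegrableOn w₂ (Ioi 0) :=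
    (integrableOn_Ioi_indicator_Ioc_rpow (by linarith)).const_mul _
  have h₁ := integrable_heatKernel_mul_prod (E := E) one_pos hw₁
  have h₂ := integrable_heatKernel_mul_prod (E := E) two_pos hw₂
  have hbound : ∀ᵐ q ∂(volume : Measure E).prod (volume.restrict (Iio 0)),
      ‖heatKernel n q.1 (-q.2) * G q‖ ≤
        heatKernel n q.1 (1 * -q.2) * w₁ (-q.2) + heatKernel n q.1 (2 * -q.2) * w₂ (-q.2) := by
    filter_upwards [Measure.quasiMeasurePreserving_snd.ae (ae_restrict_mem measurableSet_Iio)]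
      with q hq
    rw [one_mul, norm_mul, norm_of_nonneg (heatKernel_nonneg _ _ (neg_pos.2 hq).le), norm_eq_abs]
    exact heatKernel_mul_abs_le _ ht hb hbx (neg_pos.2 hq) (by linarith) hK
      (by simpa only [sub_neg_eq_add] using hG q.1 q.2 hq)
  have hp₁' : p - 1 ≠ 0 := by linarith
  have hp₂' : 2 - p ≠ 0 := by linarith
  calc _ = ‖∫ q, heatKernel n q.1 (-q.2) * G q
        ∂(volume : Measure E).prod (volume.restrict (Iio 0))‖ := (norm_eq_abs _).symm
    _ ≤ ∫ q, (heatKernel n q.1 (1 * -q.2) * w₁ (-q.2) + heatKernel n q.1 (2 * -q.2) * w₂ (-q.2))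
        ∂(volume : Measure E).prod (volume.restrict (Iio 0)) :=
      norm_integral_le_of_norm_le (h₁.add h₂) hbound
    _ = (∫ σ in Ioi 0, w₁ σ) + ∫ σ in Ioi 0, w₂ σ := by
      rw [integral_add h₁ h₂, integral_heatKernel_mul_prod one_pos hw₁,
        integral_heatKernel_mul_prod two_pos hw₂]
    _ = K * (p / (p - 1) * b ^ (1 - p)) +
          2 ^ ((n : ℝ) / 2) * 16 * K / b * (b ^ (1 - p + 1) / (1 - p + 1)) := by
      simp only [w₁, w₂, integral_const_mul]
      rw [integral_Ioi_max_rpow_neg hb hp₁, integral_Ioi_indicator_Ioc_rpow hb.le (by linarith)]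
    _ = _ := by
      rw [rpow_add hb, rpow_one, show 1 - p + 1 = 2 - p by ring]
      field_simp

end HeatKernel

theorem convolution_gradient_estimate_general (n : ℕ) (β C₀ M : ℝ)
    (hβ : 1 < β ∧ β ≤ 2) (hC₀ : 0 < C₀)
    (F : EuclideanSpace ℝ (Fin n) → ℝ → ℝ)
    (hFbdd : ∀ x (t : ℝ), t ≤ 0 → |F x t| ≤ M)
    (hFdecay : ∀ x (t : ℝ), t ≤ 0 → C₀ ≤ Real.sqrt (‖x‖ ^ 2 - t) →
      |F x t| ≤ C₀ * (‖x‖ ^ 2 - t) ^ (-(β + 1) / 2)) :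
    ∃ C > 0, ∀ (x : EuclideanSpace ℝ (Fin n)) (t : ℝ), t ≤ 0 →
      C₀ ≤ Real.sqrt (‖x‖ ^ 2 - t) →
      |∫ p in {p : EuclideanSpace ℝ (Fin n) × ℝ | p.2 ≤ 0},
          (4 * Real.pi * (-p.2)) ^ (-(n : ℝ) / 2) * Real.exp (-‖p.1‖ ^ 2 / (4 * (-p.2))) *
            F (x - p.1) (t + p.2)| ≤
        C * (‖x‖ ^ 2 - t) ^ ((1 - β) / 2) := by
  obtain ⟨hβ₁, hβ₂⟩ := hβ
  set p := (β + 1) / 2 with hp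
  have hp₁ : 1 < p := by linarith
  have hp₂ : p < 2 := by linarith
  set K := C₀ + M * (C₀ ^ 2) ^ p
  have hK : 0 < K := by
    have hM : 0 ≤ M := (abs_nonneg _).trans (hFbdd 0 0 le_rfl)
    positivity
  have hF : ∀ z u, u ≤ 0 → 0 < ‖z‖ ^ 2 - u → |F z u| ≤ K * (‖z‖ ^ 2 - u) ^ (-p) :=
    fun z u hu hQ => abs_le_mul_rpow_neg_of_le_of_decay (by linarith) hQ hC₀ (hFbdd z u hu)
      (by simpa only [neg_div] using hFdecay z u hu)
  have hD : 0 < p / (p - 1) + 2 ^ ((n : ℝ) / 2) * 16 / (2 - p) :=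
    add_pos (div_pos (by linarith) (by linarith)) (div_pos (by positivity) (by linarith))
  refine ⟨K * (p / (p - 1) + 2 ^ ((n : ℝ) / 2) * 16 / (2 - p)) * 4 ^ (p - 1),
    mul_pos (mul_pos hK hD) (by positivity), fun x t ht hx => ?_⟩
  have hA : 0 < ‖x‖ ^ 2 - t := sqrt_pos.1 (hC₀.trans_le hx)
  have h := abs_integral_heatKernel_mul_le (fun q => F (x - q.1) (t + q.2)) ht
    (b := (‖x‖ ^ 2 - t) / 4) (by positivity) (by linarith) hp₁ hp₂ hK.le
    fun y s hs => hF _ _ (by linarith) (by nlinarith [sq_nonneg ‖x - y‖])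
  have h4 : (4 : ℝ) ^ (p - 1) = (4 ^ (1 - p))⁻¹ := by rw [← rpow_neg (by norm_num), neg_sub]
  rw [finrank_euclideanSpace_fin, div_rpow hA.le (by norm_num)] at h
  rw [volume_restrict_setOf_snd_nonpos, show (1 - β) / 2 = 1 - p by rw [hp]; ring, h4]
  exact h.trans_eq (by ring)

/-- The estimate of Step 1 of Lemma 2.1: if `D_{xᵢ}f` is continuous, globally
bounded, and satisfies `|D_{xᵢ}f| ≤ C₀ R^{-(β+1)}` for parabolic norm `R ≥ C₀`
with `β ∈ (1,2]`, then `vᵢ(x,t) = ∫ Γ(y,−s) D_{xᵢ}f(x−y,t+s) dy ds` satisfies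
`|vᵢ| ≤ C R^{1−β}` for `R ≥ C₀`. -/
theorem convolution_gradient_estimate (n : ℕ) (hn : 1 ≤ n) (β C₀ M : ℝ)
    (hβ : 1 < β ∧ β ≤ 2) (hC₀ : 0 < C₀) (hM : 0 < M)
    (f : EuclideanSpace ℝ (Fin n) → ℝ → ℝ) (i : Fin n)
    (F : EuclideanSpace ℝ (Fin n) → ℝ → ℝ)
    (hF : ∀ x (t : ℝ), t ≤ 0 →
      F x t = fderiv ℝ (fun y => f y t) x (EuclideanSpace.single i 1))
    (hFcont : Continuous (fun p : EuclideanSpace ℝ (Fin n) × ℝ => F p.1 p.2))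
    (hFbdd : ∀ x (t : ℝ), t ≤ 0 → |F x t| ≤ M)
    (hFdecay : ∀ x (t : ℝ), t ≤ 0 → C₀ ≤ Real.sqrt (‖x‖ ^ 2 - t) →
      |F x t| ≤ C₀ * (‖x‖ ^ 2 - t) ^ (-(β + 1) / 2)) :
    ∃ C > 0, ∀ (x : EuclideanSpace ℝ (Fin n)) (t : ℝ), t ≤ 0 →
      C₀ ≤ Real.sqrt (‖x‖ ^ 2 - t) →
      |∫ p in {p : EuclideanSpace ℝ (Fin n) × ℝ | p.2 ≤ 0},
          (4 * Real.pi * (-p.2)) ^ (-(n : ℝ) / 2) * Real.exp (-‖p.1‖ ^ 2 / (4 * (-p.2))) *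
            F (x - p.1) (t + p.2)| ≤
        C * (‖x‖ ^ 2 - t) ^ ((1 - β) / 2) :=
  convolution_gradient_estimate_general n β C₀ M hβ hC₀ F hFbdd hFdecay
end
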